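/- In any B_{q,t}-module datum the identity d₋d₋d₊d₊d₋d₊ = d₋d₊d₋d₋d₊d₊ holds as operators V₀ → V₀ (right-to-left composition: on the left V₀→V₁→V₀→V₁→V₂→V₁→V₀, on the right V₀→V₁→V₂→V₁→V₀→V₁→V₀). In particular the operator d₋d₋d₊d₊ : V₀ → V₀ commutes with e₀ = d₋d₊. -/
import Mathlib


/- Common setup: the field K = ℚ(q,t) and the notion of a B_{q,t}-module datum,
i.e. a family of K-vector spaces V_k (k ≥ 0) together with maps d₊ : V_k → V_{k+1},
d₋ : V_k → V_{k−1}, invertible operators z_i (1 ≤ i ≤ k) and operators T_i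
(1 ≤ i ≤ k−1) on V_k (the T_i are invertible as a consequence of the quadratic
Hecke relation, so we record them as units), subject to the defining relations
of the double Dyck path algebra 𝔹_{q,t}.  Operators compose right-to-left;
`Module.End` multiplication is composition. -/

noncomputable section

/-- The field ℚ(q,t). -/
abbrev Kq : Type := FractionRing (MvPolynomial (Fin 2) ℚ)

/-- The variable q ∈ ℚ(q,t). -/
def qv : Kq := algebraMap (MvPolynomial (Fin 2) ℚ) Kq (MvPolynomial.X 0)

/-- The variable t ∈ ℚ(q,t). -/
def tv : Kq := algebraMap (MvPolynomial (Fin 2) ℚ) Kq (MvPolynomial.X 1)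

/-- φ := (q−1)^{−1}(d₊d₋ − d₋d₊), an operator on V_{k+1}. -/
def phiE {V : ℕ → Type*} [∀ k, AddCommGroup (V k)] [∀ k, Module Kq (V k)]
    (dp : ∀ k, V k →ₗ[Kq] V (k + 1)) (dm : ∀ k, V (k + 1) →ₗ[Kq] V k) (k : ℕ) :
    Module.End Kq (V (k + 1)) :=
  (qv - 1)⁻¹ • (dp k ∘ₗ dm k - dm (k + 1) ∘ₗ dp (k + 1))

/-- A B_{q,t}-module datum on the family of K-vector spaces `V`.
`z k i` is the operator z_i on V_k (meaningful for 1 ≤ i ≤ k) and `T k i` is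
the operator T_i on V_k (meaningful for 1 ≤ i ≤ k−1); all relations are imposed
on every V_k on which all their factors are defined. -/
structure BqtDatum (V : ℕ → Type*) [∀ k, AddCommGroup (V k)] [∀ k, Module Kq (V k)] where
  /-- d₊ : V_k → V_{k+1} -/
  dp : ∀ k, V k →ₗ[Kq] V (k + 1)
  /-- d₋ : V_{k+1} → V_k -/
  dm : ∀ k, V (k + 1) →ₗ[Kq] V k
  /-- the pairwise commuting invertible operators z_1, …, z_k on V_k -/
  z : ∀ k, ℕ → (Module.End Kq (V k))ˣ
  /-- the operators T_1, …, T_{k−1} on V_k -/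
  T : ∀ k, ℕ → (Module.End Kq (V k))ˣ
  z_comm : ∀ k i j, 1 ≤ i → i ≤ k → 1 ≤ j → j ≤ k → z k i * z k j = z k j * z k i
  hecke : ∀ k i, 1 ≤ i → i + 1 ≤ k →
    ((T k i : Module.End Kq (V k)) - 1) * ((T k i : Module.End Kq (V k)) + qv • 1) = 0
  braid : ∀ k i, 1 ≤ i → i + 2 ≤ k →
    T k i * T k (i + 1) * T k i = T k (i + 1) * T k i * T k (i + 1)
  T_far : ∀ k i j, 1 ≤ i → i + 1 ≤ k → 1 ≤ j → j + 1 ≤ k → i + 1 < j →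
    T k i * T k j = T k j * T k i
  TzT : ∀ k i, 1 ≤ i → i + 1 ≤ k →
    (((T k i)⁻¹ : (Module.End Kq (V k))ˣ) : Module.End Kq (V k)) *
        (z k (i + 1) : Module.End Kq (V k)) *
        (((T k i)⁻¹ : (Module.End Kq (V k))ˣ) : Module.End Kq (V k)) =
      qv⁻¹ • (z k i : Module.End Kq (V k))
  zT_far : ∀ k i j, 1 ≤ i → i ≤ k → 1 ≤ j → j + 1 ≤ k → i ≠ j → i ≠ j + 1 →
    z k i * T k j = T k j * z k i
  dmdmT : ∀ k, (dm k ∘ₗ dm (k + 1)) ∘ₗ (T (k + 2) (k + 1) : Module.End Kq (V (k + 2))) =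
    dm k ∘ₗ dm (k + 1)
  dmT : ∀ k i, 1 ≤ i → i + 1 ≤ k →
    dm k ∘ₗ (T (k + 1) i : Module.End Kq (V (k + 1))) = (T k i : Module.End Kq (V k)) ∘ₗ dm k
  Tdpdp : ∀ k, (T (k + 2) 1 : Module.End Kq (V (k + 2))) ∘ₗ (dp (k + 1) ∘ₗ dp k) =
    dp (k + 1) ∘ₗ dp k
  dpT : ∀ k i, 1 ≤ i → i + 1 ≤ k →
    dp k ∘ₗ (T k i : Module.End Kq (V k)) = (T (k + 1) (i + 1) : Module.End Kq (V (k + 1))) ∘ₗ dp k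
  phidm : ∀ k, qv • (phiE dp dm k ∘ₗ dm (k + 1)) =
    (dm (k + 1) ∘ₗ phiE dp dm (k + 1)) ∘ₗ (T (k + 2) (k + 1) : Module.End Kq (V (k + 2)))
  Tphidp : ∀ k, (T (k + 2) 1 : Module.End Kq (V (k + 2))) ∘ₗ (phiE dp dm (k + 1) ∘ₗ dp (k + 1)) =
    qv • (dp (k + 1) ∘ₗ phiE dp dm k)
  zdm : ∀ k i, 1 ≤ i → i ≤ k →
    (z k i : Module.End Kq (V k)) ∘ₗ dm k = dm k ∘ₗ (z (k + 1) i : Module.End Kq (V (k + 1)))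
  dpz : ∀ k i, 1 ≤ i → i ≤ k →
    dp k ∘ₗ (z k i : Module.End Kq (V k)) = (z (k + 1) (i + 1) : Module.End Kq (V (k + 1))) ∘ₗ dp k
  zmain : ∀ k, (z (k + 1) 1 : Module.End Kq (V (k + 1))) ∘ₗ
      (qv • (dp k ∘ₗ dm k) - dm (k + 1) ∘ₗ dp (k + 1)) =
    (qv * tv) • ((dp k ∘ₗ dm k - dm (k + 1) ∘ₗ dp (k + 1)) ∘ₗ
      (z (k + 1) (k + 1) : Module.End Kq (V (k + 1))))

namespace BqtDatum

variable {V : ℕ → Type*} [∀ k, AddCommGroup (V k)] [∀ k, Module Kq (V k)]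

/-- e_m := d₋ z₁^m d₊ : V₀ → V₀. -/
def eOp (D : BqtDatum V) (m : ℤ) : Module.End Kq (V 0) :=
  D.dm 0 ∘ₗ ((D.z 1 1 ^ m : (Module.End Kq (V 1))ˣ) : Module.End Kq (V 1)) ∘ₗ D.dp 0

end BqtDatum

open BqtDatum in
/-- d₋d₋d₊d₊d₋d₊ = d₋d₊d₋d₋d₊d₊ as operators V₀ → V₀ (right-to-left
composition); in particular d₋d₋d₊d₊ commutes with e₀ = d₋d₊. -/
theorem stmt9 (V : ℕ → Type*) [∀ k, AddCommGroup (V k)] [∀ k, Module Kq (V k)]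
    (D : BqtDatum V) :
    (D.dm 0 ∘ₗ D.dm 1 ∘ₗ D.dp 1 ∘ₗ D.dp 0 ∘ₗ D.dm 0 ∘ₗ D.dp 0 =
      D.dm 0 ∘ₗ D.dp 0 ∘ₗ D.dm 0 ∘ₗ D.dm 1 ∘ₗ D.dp 1 ∘ₗ D.dp 0)
    ∧
    (D.dm 0 ∘ₗ D.dm 1 ∘ₗ D.dp 1 ∘ₗ D.dp 0 : Module.End Kq (V 0)) * eOp D 0 =
      eOp D 0 * (D.dm 0 ∘ₗ D.dm 1 ∘ₗ D.dp 1 ∘ₗ D.dp 0 : Module.End Kq (V 0)) := by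
  have hinj : Function.Injective (algebraMap (MvPolynomial (Fin 2) ℚ) Kq) :=
    IsFractionRing.injective _ _
  have hq0 : qv ≠ 0 := by
    have hx : (MvPolynomial.X 0 : MvPolynomial (Fin 2) ℚ) ≠ 0 := MvPolynomial.X_ne_zero 0
    simpa [qv, map_eq_zero_iff _ hinj] using hx
  have hq1 : qv - 1 ≠ 0 := by
    rw [sub_ne_zero]
    intro h
    have hx : (MvPolynomial.X 0 : MvPolynomial (Fin 2) ℚ) = 1 := by
      apply hinj; rw [map_one]; exact h
    have := congrArg (MvPolynomial.eval fun _ => (0 : ℚ)) hx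
    simp at this
  have key : ∀ x : V 0,
      D.dm 0 (D.dm 1 (D.dp 1 (phiE D.dp D.dm 0 (D.dp 0 x)))) =
      D.dm 0 (phiE D.dp D.dm 0 (D.dm 1 (D.dp 1 (D.dp 0 x)))) := by
    intro x
    apply smul_right_injective (V 0) hq0
    have h1 := LinearMap.congr_fun (D.Tphidp 0) (D.dp 0 x)
    have h2 := LinearMap.congr_fun (D.phidm 0) (D.dp 1 (D.dp 0 x))
    have h3 := LinearMap.congr_fun (D.dmdmT 0) (phiE D.dp D.dm 1 (D.dp 1 (D.dp 0 x)))
    have h4 := LinearMap.congr_fun (D.Tdpdp 0) x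
    simp only [LinearMap.comp_apply, LinearMap.smul_apply, Nat.reduceAdd] at h1 h2 h3 h4 ⊢
    calc qv • D.dm 0 (D.dm 1 (D.dp 1 (phiE D.dp D.dm 0 (D.dp 0 x))))
        = D.dm 0 (D.dm 1 (qv • D.dp 1 (phiE D.dp D.dm 0 (D.dp 0 x)))) := by
          rw [map_smul, map_smul]
      _ = D.dm 0 (D.dm 1 ((D.T 2 1 : Module.End Kq (V 2))
            (phiE D.dp D.dm 1 (D.dp 1 (D.dp 0 x))))) := by rw [← h1]
      _ = D.dm 0 (D.dm 1 (phiE D.dp D.dm 1 (D.dp 1 (D.dp 0 x)))) := h3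
      _ = D.dm 0 (D.dm 1 (phiE D.dp D.dm 1
            ((D.T 2 1 : Module.End Kq (V 2)) (D.dp 1 (D.dp 0 x))))) := by rw [h4]
      _ = D.dm 0 (qv • phiE D.dp D.dm 0 (D.dm 1 (D.dp 1 (D.dp 0 x)))) := by rw [← h2]
      _ = qv • D.dm 0 (phiE D.dp D.dm 0 (D.dm 1 (D.dp 1 (D.dp 0 x)))) := map_smul _ _ _
  have main : D.dm 0 ∘ₗ D.dm 1 ∘ₗ D.dp 1 ∘ₗ D.dp 0 ∘ₗ D.dm 0 ∘ₗ D.dp 0 =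
      D.dm 0 ∘ₗ D.dp 0 ∘ₗ D.dm 0 ∘ₗ D.dm 1 ∘ₗ D.dp 1 ∘ₗ D.dp 0 := by
    ext x
    simp only [LinearMap.comp_apply]
    have h := key x
    simp only [phiE, LinearMap.smul_apply, LinearMap.sub_apply, LinearMap.comp_apply,
      map_smul, map_sub] at h
    have h' := smul_right_injective (V 0) (inv_ne_zero hq1) h
    exact sub_left_inj.mp h'
  refine ⟨main, ?_⟩
  have he : eOp D 0 = D.dm 0 ∘ₗ D.dp 0 := by
    simp [eOp, Module.End.one_eq_id]
  rw [he, Module.End.mul_eq_comp, Module.End.mul_eq_comp]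
  ext x
  simp only [LinearMap.comp_apply]
  exact LinearMap.congr_fun main x

end
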